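/- Let X_s be distributed according to the BESQ(4) transition density from x > 0 over time s > 0, i.e., X_s/s is noncentral chi-square with 4 degrees of freedom and noncentrality parameter λ = x/s. Then E[1/X_s] = (1/x)(1 − exp(−x/(2s))). -/

import Mathlib

/-!
A noncentral χ²₄(λ) variable is a Poisson(λ/2) mixture of central χ²_{4+2k} variables, and a
central χ²_d variable has `E[1/Y] = 1/(d-2)` for `d > 2`: multiplying the density by `1/y` shifts
the Gamma integral `∫ y^{a-1} e^{-y/2} dy = 2^a Γ(a)` down by one and `Γ(a+1) = a Γ(a)`. So
`E[1/Y] = Σ_k e^{-μ} μ^k / k! · 1/(2(k+1))` with `μ = λ/2`, and since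
`μ^k / (k! (k+1)) = μ^{k+1} / (μ (k+1)!)` this is `(e^μ - 1) e^{-μ} / (2μ) = (1 - e^{-λ/2}) / λ`.
All terms are absolutely summable, which justifies exchanging sum and integral.
-/

/-- Density of a central chi-square distribution with `d` degrees of freedom:
`y^{d/2−1} e^{−y/2} / (2^{d/2} Γ(d/2))`. -/
noncomputable def centralChiSqPdf (d y : ℝ) : ℝ :=
  y ^ (d / 2 - 1) * Real.exp (-y / 2) / (2 ^ (d / 2) * Real.Gamma (d / 2))

/-- Density of a noncentral chi-square distribution with 4 degrees of freedom and
noncentrality parameter `λ`, as a Poisson(λ/2) mixture of central chi-square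
densities with `4 + 2k` degrees of freedom. -/
noncomputable def ncChiSq4Pdf (lam y : ℝ) : ℝ :=
  ∑' k : ℕ, (Real.exp (-lam / 2) * (lam / 2) ^ k / (Nat.factorial k : ℝ)) *
    centralChiSqPdf (4 + 2 * k) y

open MeasureTheory Set Real
open scoped Nat

lemma centralChiSqPdf_nonneg {d y : ℝ} (hd : 0 < d) (hy : 0 ≤ y) :
    0 ≤ centralChiSqPdf d y := by
  have : 0 < Gamma (d / 2) := Gamma_pos_of_pos (by positivity)
  unfold centralChiSqPdf
  positivity

lemma inv_mul_centralChiSqPdf {d y : ℝ} (hy : 0 < y) :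
    y⁻¹ * centralChiSqPdf d y =
      (2 ^ (d / 2) * Gamma (d / 2))⁻¹ * (y ^ ((d / 2 - 1) - 1) * exp (-(1 / 2 * y))) := by
  rw [centralChiSqPdf, rpow_sub_one hy.ne' (d / 2 - 1)]
  field_simp

lemma integrableOn_inv_mul_centralChiSqPdf {d : ℝ} (hd : 2 < d) :
    IntegrableOn (fun y ↦ y⁻¹ * centralChiSqPdf d y) (Ioi 0) := by
  have h := integrableOn_rpow_mul_exp_neg_mul_rpow (s := d / 2 - 1 - 1) (p := 1) (b := 1 / 2)
    (by linarith) one_pos (by norm_num)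
  refine IntegrableOn.congr_fun (h.const_mul (2 ^ (d / 2) * Gamma (d / 2))⁻¹)
    (fun y hy ↦ ?_) measurableSet_Ioi
  rw [inv_mul_centralChiSqPdf hy, rpow_one, neg_mul]

lemma integral_inv_mul_centralChiSqPdf {d : ℝ} (hd : 2 < d) :
    ∫ y in Ioi 0, y⁻¹ * centralChiSqPdf d y = (d - 2)⁻¹ := by
  have ha : 0 < d / 2 - 1 := by linarith
  rw [setIntegral_congr_fun measurableSet_Ioi fun y hy ↦ inv_mul_centralChiSqPdf hy,
    integral_const_mul, integral_rpow_mul_exp_neg_mul_Ioi ha (by norm_num)]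
  have hΓ : Gamma (d / 2) = (d / 2 - 1) * Gamma (d / 2 - 1) := by
    rw [← Gamma_add_one ha.ne', sub_add_cancel]
  have h2 : (2 : ℝ) ^ (d / 2) = 2 ^ (d / 2 - 1) * 2 := by
    rw [← rpow_add_one two_ne_zero, sub_add_cancel]
  have : 0 < Gamma (d / 2 - 1) := Gamma_pos_of_pos ha
  rw [hΓ, h2, one_div_one_div, show d - 2 = 2 * (d / 2 - 1) by ring]
  generalize d / 2 - 1 = a at *
  field_simp

lemma tsum_exp_neg_mul_pow_div_factorial_div_succ {μ : ℝ} (hμ : μ ≠ 0) :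
    ∑' k : ℕ, exp (-μ) * μ ^ k / k ! / (k + 1) = (1 - exp (-μ)) / μ := by
  have hterm (k : ℕ) : exp (-μ) * μ ^ k / k ! / (k + 1) =
      exp (-μ) / μ * (μ ^ (k + 1) / (k + 1)!) := by
    rw [Nat.factorial_succ]
    push_cast
    field_simp
    ring
  have hshift : ∑' k : ℕ, μ ^ (k + 1) / (k + 1)! = exp μ - 1 := by
    rw [exp_eq_exp_ℝ, congrFun NormedSpace.exp_eq_tsum_div μ,
      (summable_pow_div_factorial μ).tsum_eq_zero_add]
    simp
  simp_rw [hterm]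
  have hinv : exp (-μ) * exp μ = 1 := by rw [← exp_add, neg_add_cancel, exp_zero]
  rw [tsum_mul_left, hshift]
  field_simp
  linear_combination hinv

lemma integral_inv_mul_ncChiSq4Pdf {lam : ℝ} (hlam : lam ≠ 0) :
    ∫ y in Ioi 0, y⁻¹ * ncChiSq4Pdf lam y = (1 - exp (-lam / 2)) / lam := by
  set w : ℕ → ℝ := fun k ↦ exp (-lam / 2) * (lam / 2) ^ k / (k ! : ℝ)
  set F : ℕ → ℝ → ℝ := fun k y ↦ w k * (y⁻¹ * centralChiSqPdf (4 + 2 * k) y)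
  have hd (k : ℕ) : 2 < 4 + 2 * (k : ℝ) := by linarith [(k.cast_nonneg : (0 : ℝ) ≤ k)]
  have hF_int (k : ℕ) : IntegrableOn (F k) (Ioi 0) :=
    (integrableOn_inv_mul_centralChiSqPdf (hd k)).const_mul (w k)
  have hmoment (k : ℕ) :
      ∫ y in Ioi 0, y⁻¹ * centralChiSqPdf (4 + 2 * k) y = (2 * (k + 1 : ℝ))⁻¹ := by
    rw [integral_inv_mul_centralChiSqPdf (hd k)]
    ring_nf
  have hF_integral (k : ℕ) : ∫ y in Ioi 0, F k y = w k * (2 * (k + 1 : ℝ))⁻¹ := by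
    rw [integral_const_mul, hmoment]
  have hF_norm (k : ℕ) : ∫ y in Ioi 0, ‖F k y‖ = |w k| * (2 * (k + 1 : ℝ))⁻¹ := by
    have hnorm : ∀ y ∈ Ioi (0 : ℝ), ‖F k y‖ = |w k| * (y⁻¹ * centralChiSqPdf (4 + 2 * k) y) :=
      fun y hy ↦ by
        rw [norm_mul, Real.norm_eq_abs, Real.norm_of_nonneg (mul_nonneg (inv_nonneg.2 hy.le)
          (centralChiSqPdf_nonneg (by linarith [hd k]) hy.le))]
    rw [setIntegral_congr_fun measurableSet_Ioi hnorm, integral_const_mul, hmoment]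
  have hw : Summable w := by
    simpa only [w, mul_div_assoc] using (summable_pow_div_factorial (lam / 2)).mul_left _
  have hF_summable : Summable fun k ↦ ∫ y in Ioi 0, ‖F k y‖ := by
    simp_rw [hF_norm]
    refine hw.abs.of_nonneg_of_le (fun k ↦ by positivity) fun k ↦ ?_
    exact mul_le_of_le_one_right (abs_nonneg _)
      (inv_le_one_of_one_le₀ (by linarith [(k.cast_nonneg : (0 : ℝ) ≤ k)]))
  calc ∫ y in Ioi 0, y⁻¹ * ncChiSq4Pdf lam y
      = ∫ y in Ioi 0, ∑' k, F k y := by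
        refine setIntegral_congr_fun measurableSet_Ioi fun y _ ↦ ?_
        rw [ncChiSq4Pdf, ← tsum_mul_left]
        exact tsum_congr fun k ↦ by ring
    _ = ∑' k : ℕ, w k * (2 * (k + 1 : ℝ))⁻¹ := by
        rw [← integral_tsum_of_summable_integral_norm hF_int hF_summable]
        simp_rw [hF_integral]
    _ = 2⁻¹ * ∑' k : ℕ, exp (-(lam / 2)) * (lam / 2) ^ k / k ! / (k + 1) := by
        rw [← tsum_mul_left]
        exact tsum_congr fun k ↦ by simp only [w, neg_div]; field_simp
    _ = (1 - exp (-lam / 2)) / lam := by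
        rw [tsum_exp_neg_mul_pow_div_factorial_div_succ (div_ne_zero hlam two_ne_zero), neg_div]
        field_simp

theorem besq4_reciprocal_expectation (s x : ℝ) (hs : 0 < s) (hx : 0 < x) :
    (∫ y in Set.Ioi (0 : ℝ), (1 / (s * y)) * ncChiSq4Pdf (x / s) y) =
      (1 / x) * (1 - Real.exp (-x / (2 * s))) := by
  simp_rw [one_div, mul_inv, mul_assoc]
  rw [integral_const_mul, integral_inv_mul_ncChiSq4Pdf (div_pos hx hs).ne',
    show -(x / s) / 2 = -x / (2 * s) by ring]
  field_simp
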